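/- Assume Hypothesis H2, σ_ε² > 0, a ∈ (1/2, 1), q > 0, 0 < δ < q, and k_ε < na, where k_ε = Card{ i ∈ {1,…,n} : (Πy)ᵢ/√(Πᵢᵢ) ≤ σ_ε q }. Then the solution set H = { σ² ∈ [0,∞) : ψ⁺_δ(σ²) = a } is a nonempty compact subset of [0,∞); in particular it contains a minimal element σ²_opt = min H. -/

import Mathlib

open Matrix

/-- The matrix `K̄ = K⁻¹ − K⁻¹F(FᵀK⁻¹F)⁻¹FᵀK⁻¹`. -/
noncomputable def Kbar {n p : ℕ} (F : Matrix (Fin n) (Fin p) ℝ)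
    (K : Matrix (Fin n) (Fin n) ℝ) : Matrix (Fin n) (Fin n) ℝ :=
  K⁻¹ - K⁻¹ * F * (Fᵀ * K⁻¹ * F)⁻¹ * Fᵀ * K⁻¹

/-- `h⁺_δ(x) = 1` if `x > δ`, `x/δ` if `0 < x ≤ δ`, `0` if `x ≤ 0`. -/
noncomputable def hplus (δ x : ℝ) : ℝ :=
  if δ < x then 1 else if 0 < x then x / δ else 0

/-- `ψ⁺_δ(K) = (1/n) Σᵢ h⁺_δ(q − (K̄y)ᵢ/√(K̄ᵢᵢ))`. -/
noncomputable def psiPlus {n p : ℕ} (F : Matrix (Fin n) (Fin p) ℝ)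
    (y : Fin n → ℝ) (δ q : ℝ) (K : Matrix (Fin n) (Fin n) ℝ) : ℝ :=
  (1 / n) * ∑ i, hplus δ (q - (Kbar F K *ᵥ y) i / Real.sqrt (Kbar F K i i))

/-!
Write `ψ⁺_δ(K) = (1/n) Σᵢ h⁺_δ(q - rᵢ(K))` with the standardized residuals
`rᵢ(K) = (K̄y)ᵢ / √K̄ᵢᵢ`. Since `K̄(cK) = c⁻¹ K̄(K)`, we get `rᵢ(cK) = rᵢ(K) / √c`.

At `σ² = 0` we have `K̄ = Π / σ_ε²`, so `rᵢ = (Πy)ᵢ / (σ_ε √Πᵢᵢ)` and only the `k_ε` indices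
with `(Πy)ᵢ / √Πᵢᵢ ≤ σ_ε q` contribute: `ψ⁺_δ(0) ≤ k_ε / n < a`. For `σ² > 0`,
`rᵢ(σ²R + σ_ε²I) = rᵢ(R + (σ_ε²/σ²) I) / σ`, and the first factor tends to `rᵢ(R)` because `K̄`
is continuous at positive definite matrices and H2 keeps `K̄ᵢᵢ > 0` (indeed
`K̄ᵢᵢ = (K̄eᵢ)ᵀ K (K̄eᵢ)` and `ker K̄ = Im F`). Hence all residuals eventually drop below
`q - δ` and `ψ⁺_δ = 1 > a`. As `ψ⁺_δ` is continuous on `[0, ∞)`, the level set `{ψ⁺_δ = a}` is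
nonempty by the intermediate value theorem, and it is closed and bounded, hence compact.
-/

open Filter Topology Set

theorem Matrix.mulVec_injective_of_rank_eq_card {m l 𝕜 : Type*} [Fintype m] [Fintype l]
    [Field 𝕜] (A : Matrix m l 𝕜) (hA : A.rank = Fintype.card l) :
    Function.Injective A.mulVec := by
  have h := LinearMap.finrank_range_add_finrank_ker A.mulVecLin
  rw [← Matrix.rank, hA, Module.finrank_fintype_fun_eq_card, add_eq_left,
    Submodule.finrank_eq_zero, LinearMap.ker_eq_bot] at h
  exact h

theorem Matrix.inv_smul_of_ne_zero {m 𝕜 : Type*} [Fintype m] [DecidableEq m] [Field 𝕜]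
    {c : 𝕜} (hc : c ≠ 0) (A : Matrix m m 𝕜) : (c • A)⁻¹ = c⁻¹ • A⁻¹ := by
  by_cases hA : IsUnit A.det
  · exact A.inv_smul' (Units.mk0 c hc) hA
  · have hcA : ¬IsUnit (c • A).det := by simpa [det_smul, hc] using hA
    rw [nonsing_inv_apply_not_isUnit _ hA, nonsing_inv_apply_not_isUnit _ hcA, smul_zero]

theorem ContinuousAt.matrix_mul {X l m o R : Type*} [TopologicalSpace X] [Fintype m] [Mul R]
    [AddCommMonoid R] [TopologicalSpace R] [ContinuousAdd R] [ContinuousMul R]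
    {A : X → Matrix l m R} {B : X → Matrix m o R} {x : X}
    (hA : ContinuousAt A x) (hB : ContinuousAt B x) : ContinuousAt (fun x => A x * B x) x :=
  (continuous_fst.matrix_mul continuous_snd).continuousAt.comp (hA.prodMk hB)

theorem continuousAt_matrix_inv_of_det_ne_zero {m 𝕜 : Type*} [Fintype m] [DecidableEq m]
    [Field 𝕜]
    [TopologicalSpace 𝕜] [IsTopologicalRing 𝕜] [ContinuousInv₀ 𝕜] {A : Matrix m m 𝕜}
    (hA : A.det ≠ 0) : ContinuousAt Inv.inv A :=
  continuousAt_matrix_inv A (by simpa [Ring.inverse_eq_inv'] using continuousAt_inv₀ hA)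

section Kbar

variable {n p : ℕ} (F : Matrix (Fin n) (Fin p) ℝ) {K : Matrix (Fin n) (Fin n) ℝ}

theorem Kbar_smul {c : ℝ} (hc : c ≠ 0) (K : Matrix (Fin n) (Fin n) ℝ) :
    Kbar F (c • K) = c⁻¹ • Kbar F K := by
  have hM : Fᵀ * (c • K)⁻¹ * F = c⁻¹ • (Fᵀ * K⁻¹ * F) := by
    simp [Matrix.inv_smul_of_ne_zero hc, Matrix.mul_smul, Matrix.smul_mul]
  rw [Kbar, Kbar, hM, Matrix.inv_smul_of_ne_zero (inv_ne_zero hc), inv_inv,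
    Matrix.inv_smul_of_ne_zero hc, smul_sub]
  simp only [Matrix.mul_smul, Matrix.smul_mul, smul_smul]
  congr 2
  field_simp

theorem Kbar_one : Kbar F 1 = 1 - F * (Fᵀ * F)⁻¹ * Fᵀ := by
  simp [Kbar]

theorem isHermitian_Kbar (hK : K.IsHermitian) : (Kbar F K).IsHermitian := by
  have hB : (Fᵀ * K⁻¹)ᴴ = K⁻¹ * F := by
    rw [conjTranspose_mul, hK.inv.eq, conjTranspose_eq_transpose_of_trivial, transpose_transpose]
  have hM : (Fᵀ * K⁻¹ * F).IsHermitian := by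
    simpa [hB, Matrix.mul_assoc] using isHermitian_conjTranspose_mul_mul F hK.inv
  have := hK.inv.sub (isHermitian_conjTranspose_mul_mul (Fᵀ * K⁻¹) hM.inv)
  rw [hB, ← Matrix.mul_assoc] at this
  exact this

variable {F} (hF : Function.Injective F.mulVec) (hK : K.PosDef)
include hF hK

theorem posDef_transpose_mul_inv_mul : (Fᵀ * K⁻¹ * F).PosDef := by
  simpa using hK.inv.conjTranspose_mul_mul_same hF

theorem transpose_mul_Kbar : Fᵀ * Kbar F K = 0 := by
  have hM := (posDef_transpose_mul_inv_mul hF hK).isUnit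
  rw [Kbar, Matrix.mul_sub]
  simp only [← Matrix.mul_assoc]
  rw [Matrix.mul_nonsing_inv _ ((isUnit_iff_isUnit_det _).1 hM), Matrix.one_mul, sub_self]

theorem Kbar_mul : Kbar F K * F = 0 := by
  have h := congrArg conjTranspose (transpose_mul_Kbar hF hK)
  rwa [conjTranspose_mul, (isHermitian_Kbar F hK.isHermitian).eq,
    conjTranspose_eq_transpose_of_trivial, transpose_transpose, conjTranspose_zero] at h

omit hF in
theorem mul_Kbar : K * Kbar F K = 1 - F * (Fᵀ * K⁻¹ * F)⁻¹ * Fᵀ * K⁻¹ := by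
  rw [Kbar, Matrix.mul_sub]
  simp only [← Matrix.mul_assoc]
  rw [Matrix.mul_nonsing_inv _ ((isUnit_iff_isUnit_det _).1 hK.isUnit), Matrix.one_mul]

theorem Kbar_mul_mul_Kbar : Kbar F K * K * Kbar F K = Kbar F K := by
  rw [Matrix.mul_assoc, mul_Kbar hK, Matrix.mul_sub, Matrix.mul_one]
  simp only [← Matrix.mul_assoc]
  rw [Kbar_mul hF hK]
  simp

theorem Kbar_mulVec_eq_zero_iff {x : Fin n → ℝ} :
    Kbar F K *ᵥ x = 0 ↔ x ∈ LinearMap.range F.mulVecLin := by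
  constructor
  · intro h
    have hx : (K * Kbar F K) *ᵥ x = 0 := by rw [← mulVec_mulVec, h, mulVec_zero]
    rw [mul_Kbar hK, sub_mulVec, one_mulVec, sub_eq_zero] at hx
    refine ⟨((Fᵀ * K⁻¹ * F)⁻¹ * Fᵀ * K⁻¹) *ᵥ x, ?_⟩
    simpa [mulVec_mulVec, Matrix.mul_assoc] using hx.symm
  · rintro ⟨u, rfl⟩
    simp [mulVec_mulVec, Kbar_mul hF hK]

theorem Kbar_diag_pos {i : Fin n} (hi : Pi.single i 1 ∉ LinearMap.range F.mulVecLin) :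
    0 < Kbar F K i i := by
  set v := Kbar F K *ᵥ Pi.single i 1
  have hv : v ≠ 0 := fun h => hi ((Kbar_mulVec_eq_zero_iff hF hK).1 h)
  have hquad : Kbar F K i i = v ⬝ᵥ K *ᵥ v := by
    have hsym (j : Fin n) : Kbar F K i j = Kbar F K j i :=
      (isHermitian_Kbar F hK.isHermitian).apply j i
    conv_lhs => rw [← Kbar_mul_mul_Kbar hF hK]
    simp only [v, Matrix.mul_apply, dotProduct, mulVec, Finset.mul_sum, Finset.sum_mul,
      Pi.single_apply, mul_ite, mul_one, mul_zero, Finset.sum_ite_eq', Finset.mem_univ, if_true,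
      hsym]
    rw [Finset.sum_comm]
    ring_nf
  simpa [hquad] using hK.dotProduct_mulVec_pos hv

theorem continuousAt_Kbar : ContinuousAt (Kbar F) K := by
  have hinv := continuousAt_matrix_inv_of_det_ne_zero hK.det_pos.ne'
  have hM : ContinuousAt (fun K : Matrix (Fin n) (Fin n) ℝ => (Fᵀ * K⁻¹ * F)⁻¹) K :=
    (continuousAt_matrix_inv_of_det_ne_zero (posDef_transpose_mul_inv_mul hF hK).det_pos.ne').comp
      (f := fun K => Fᵀ * K⁻¹ * F)
      ((continuousAt_const.matrix_mul hinv).matrix_mul continuousAt_const)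
  exact hinv.sub ((((hinv.matrix_mul continuousAt_const).matrix_mul hM).matrix_mul
    continuousAt_const).matrix_mul hinv)

end Kbar

section Residual

variable {n p : ℕ} (F : Matrix (Fin n) (Fin p) ℝ) (y : Fin n → ℝ)

noncomputable def standardizedResidual (K : Matrix (Fin n) (Fin n) ℝ) (i : Fin n) : ℝ :=
  (Kbar F K *ᵥ y) i / √(Kbar F K i i)

theorem standardizedResidual_smul {c : ℝ} (hc : 0 < c) (K : Matrix (Fin n) (Fin n) ℝ)
    (i : Fin n) : standardizedResidual F y (c • K) i = standardizedResidual F y K i / √c := by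
  simp only [standardizedResidual, Kbar_smul F hc.ne', smul_mulVec, Pi.smul_apply,
    Matrix.smul_apply, smul_eq_mul, Real.sqrt_mul (inv_nonneg.2 hc.le), Real.sqrt_inv]
  have hc' : c⁻¹ = (√c)⁻¹ * (√c)⁻¹ := by rw [← mul_inv, Real.mul_self_sqrt hc.le]
  rcases eq_or_ne √(Kbar F K i i) 0 with hd | hd
  · simp [hd]
  · rw [hc']
    field_simp

theorem standardizedResidual_one (i : Fin n) : standardizedResidual F y 1 i =
      ((1 - F * (Fᵀ * F)⁻¹ * Fᵀ) *ᵥ y) i /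
        √((1 - F * (Fᵀ * F)⁻¹ * Fᵀ : Matrix (Fin n) (Fin n) ℝ) i i) := by
  rw [standardizedResidual, Kbar_one]

variable {F}

theorem continuousAt_standardizedResidual (hF : Function.Injective F.mulVec)
    {K : Matrix (Fin n) (Fin n) ℝ} (hK : K.PosDef) {i : Fin n}
    (hi : Pi.single i 1 ∉ LinearMap.range F.mulVecLin) :
    ContinuousAt (fun K => standardizedResidual F y K i) K := by
  have hKbar := continuousAt_Kbar hF hK
  have hnum : ContinuousAt (fun K => (Kbar F K *ᵥ y) i) K :=
    (show Continuous fun A : Matrix (Fin n) (Fin n) ℝ => (A *ᵥ y) i by fun_prop).continuousAt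
      |>.comp (f := Kbar F) hKbar
  have hdiag : ContinuousAt (fun K => Kbar F K i i) K :=
    (continuous_id.matrix_elem i i).continuousAt.comp (f := Kbar F) hKbar
  exact hnum.div hdiag.sqrt (Real.sqrt_pos.2 (Kbar_diag_pos hF hK hi)).ne'

theorem tendsto_standardizedResidual_atTop (hF : Function.Injective F.mulVec)
    (hH2 : ∀ i : Fin n, Pi.single i 1 ∉ LinearMap.range F.mulVecLin)
    {R : Matrix (Fin n) (Fin n) ℝ} (hR : R.PosDef) (c : ℝ) (i : Fin n) :
    Tendsto (fun s : ℝ => standardizedResidual F y (s • R + c • 1) i) atTop (𝓝 0) := by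
  have hlim : Tendsto (fun s : ℝ => R + (c * s⁻¹) • 1) atTop (𝓝 R) := by
    simpa using ((tendsto_inv_atTop_zero.const_mul c).smul_const
      (1 : Matrix (Fin n) (Fin n) ℝ)).const_add R
  have hscale : (fun s : ℝ => standardizedResidual F y (R + (c * s⁻¹) • 1) i / √s)
      =ᶠ[atTop] fun s => standardizedResidual F y (s • R + c • 1) i := by
    filter_upwards [eventually_gt_atTop 0] with s hs
    rw [← standardizedResidual_smul F y hs, smul_add, smul_smul, mul_left_comm,
      mul_inv_cancel₀ hs.ne', mul_one]
  exact (((continuousAt_standardizedResidual y hF hR (hH2 i)).tendsto.comp hlim).div_atTop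
    Real.tendsto_sqrt_atTop).congr' hscale

end Residual

section Hplus

variable {δ : ℝ}

theorem hplus_eq_max_min (hδ : 0 < δ) (x : ℝ) : hplus δ x = max 0 (min 1 (x / δ)) := by
  unfold hplus
  split_ifs with h₁ h₂
  · rw [min_eq_left ((one_le_div hδ).2 h₁.le), max_eq_right zero_le_one]
  · rw [min_eq_right ((div_le_one hδ).2 (not_lt.1 h₁)), max_eq_right (div_pos h₂ hδ).le]
  · exact (max_eq_left (min_le_of_right_le
      (div_nonpos_of_nonpos_of_nonneg (not_lt.1 h₂) hδ.le))).symm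

theorem continuous_hplus (hδ : 0 < δ) : Continuous (hplus δ) := by
  simp only [funext (hplus_eq_max_min hδ)]
  fun_prop

theorem hplus_le_one (hδ : 0 < δ) (x : ℝ) : hplus δ x ≤ 1 := by
  rw [hplus_eq_max_min hδ]
  exact max_le zero_le_one (min_le_left _ _)

theorem hplus_of_lt {x : ℝ} (h : δ < x) : hplus δ x = 1 := if_pos h

theorem hplus_of_nonpos (hδ : 0 < δ) {x : ℝ} (h : x ≤ 0) : hplus δ x = 0 := by
  rw [hplus, if_neg (by linarith), if_neg h.not_gt]

end Hplus

section Psi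

variable {n p : ℕ} {F : Matrix (Fin n) (Fin p) ℝ} (y : Fin n → ℝ) {δ q : ℝ}

theorem psiPlus_eq_sum_standardizedResidual (K : Matrix (Fin n) (Fin n) ℝ) :
    psiPlus F y δ q K = 1 / n * ∑ i, hplus δ (q - standardizedResidual F y K i) :=
  rfl

theorem continuousAt_psiPlus (hF : Function.Injective F.mulVec)
    (hH2 : ∀ i : Fin n, Pi.single i 1 ∉ LinearMap.range F.mulVecLin) (hδ : 0 < δ)
    {K : Matrix (Fin n) (Fin n) ℝ} (hK : K.PosDef) : ContinuousAt (psiPlus F y δ q) K := by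
  refine continuousAt_const.mul (tendsto_finsetSum _ fun i _ => ?_)
  exact (continuous_hplus hδ).continuousAt.comp
    (continuousAt_const.sub (continuousAt_standardizedResidual y hF hK (hH2 i)))

theorem psiPlus_noise_le (hδ : 0 < δ) {σ : ℝ} (hσ : 0 < σ) :
    psiPlus F y δ q (σ ^ 2 • 1) ≤
      ((Finset.univ.filter fun i => standardizedResidual F y 1 i ≤ σ * q).card : ℝ) / n := by
  have hres (i : Fin n) : standardizedResidual F y (σ ^ 2 • 1) i =
      standardizedResidual F y 1 i / σ := by
    rw [standardizedResidual_smul F y (by positivity), Real.sqrt_sq hσ.le]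
  rw [psiPlus_eq_sum_standardizedResidual, one_div_mul_eq_div, ← Finset.sum_boole]
  gcongr with i
  rw [hres]
  split_ifs with hi
  · exact hplus_le_one hδ _
  · refine (hplus_of_nonpos hδ ?_).le
    rw [sub_nonpos, le_div_iff₀ hσ]
    linarith [not_le.1 hi]

theorem psiPlus_eventually_eq_one (hn : 0 < n) (hF : Function.Injective F.mulVec)
    (hH2 : ∀ i : Fin n, Pi.single i 1 ∉ LinearMap.range F.mulVecLin)
    {R : Matrix (Fin n) (Fin n) ℝ} (hR : R.PosDef) (c : ℝ) (hδq : δ < q) :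
    ∀ᶠ s : ℝ in atTop, psiPlus F y δ q (s • R + c • 1) = 1 := by
  have hsmall :
      ∀ᶠ s : ℝ in atTop, ∀ i, standardizedResidual F y (s • R + c • 1) i < q - δ :=
    eventually_all.2 fun i => (tendsto_standardizedResidual_atTop y hF hH2 hR c i).eventually
      (gt_mem_nhds (sub_pos.2 hδq))
  filter_upwards [hsmall] with s hs
  rw [psiPlus_eq_sum_standardizedResidual,
    Finset.sum_congr rfl fun i _ => hplus_of_lt (by linarith [hs i])]
  simp [hn.ne']

end Psi

theorem ContinuousOn.nonempty_Ici_inter_preimage {g : ℝ → ℝ} {c a : ℝ}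
    (hg : ContinuousOn g (Ici c)) (hc : g c ≤ a) (hev : ∀ᶠ s in atTop, a ≤ g s) :
    (Ici c ∩ g ⁻¹' {a}).Nonempty := by
  obtain ⟨S, haS, hcS⟩ := (hev.and (eventually_ge_atTop c)).exists
  obtain ⟨s, hs, hgs⟩ := intermediate_value_Icc hcS (hg.mono Icc_subset_Ici_self) ⟨hc, haS⟩
  exact ⟨s, hs.1, hgs⟩

theorem ContinuousOn.isCompact_Ici_inter_preimage {g : ℝ → ℝ} {c a : ℝ}
    (hg : ContinuousOn g (Ici c)) (hev : ∀ᶠ s in atTop, g s ≠ a) :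
    IsCompact (Ici c ∩ g ⁻¹' {a}) := by
  obtain ⟨S, hS⟩ := eventually_atTop.1 hev
  refine (isCompact_Icc (a := c) (b := S)).of_isClosed_subset
    (hg.preimage_isClosed_of_isClosed isClosed_Ici isClosed_singleton) ?_
  rintro s ⟨hcs, hgs⟩
  exact ⟨hcs, not_lt.1 fun hSs => hS s hSs.le hgs⟩

theorem stmt13_general (n p : ℕ)
    (F : Matrix (Fin n) (Fin p) ℝ) (hF : F.rank = p)
    (hH2 : ∀ i : Fin n, Pi.single i (1 : ℝ) ∉ LinearMap.range (Matrix.mulVecLin F))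
    (y : Fin n → ℝ) (R : Matrix (Fin n) (Fin n) ℝ) (hR : R.PosDef)
    (sigeps : ℝ) (hsig : 0 < sigeps)
    (a : ℝ) (ha : a ∈ Set.Ioo (1 / 2 : ℝ) 1)
    (q : ℝ) (δ : ℝ) (hδ : 0 < δ) (hδq : δ < q)
    (hke : ((Finset.univ.filter fun i : Fin n =>
        (((1 : Matrix (Fin n) (Fin n) ℝ) - F * (Fᵀ * F)⁻¹ * Fᵀ) *ᵥ y) i /
          Real.sqrt (((1 : Matrix (Fin n) (Fin n) ℝ) - F * (Fᵀ * F)⁻¹ * Fᵀ) i i)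
          ≤ sigeps * q).card : ℝ) < n * a) :
    ({s : ℝ | s ∈ Set.Ici (0 : ℝ) ∧
        psiPlus F y δ q (s • R + (sigeps ^ 2) • (1 : Matrix (Fin n) (Fin n) ℝ)) = a}).Nonempty ∧
    IsCompact {s : ℝ | s ∈ Set.Ici (0 : ℝ) ∧
        psiPlus F y δ q (s • R + (sigeps ^ 2) • (1 : Matrix (Fin n) (Fin n) ℝ)) = a} ∧
    ∃ m ∈ {s : ℝ | s ∈ Set.Ici (0 : ℝ) ∧
        psiPlus F y δ q (s • R + (sigeps ^ 2) • (1 : Matrix (Fin n) (Fin n) ℝ)) = a},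
      ∀ s ∈ {s : ℝ | s ∈ Set.Ici (0 : ℝ) ∧
        psiPlus F y δ q (s • R + (sigeps ^ 2) • (1 : Matrix (Fin n) (Fin n) ℝ)) = a},
        m ≤ s := by
  have hn : 0 < n := Nat.pos_of_ne_zero (by rintro rfl; simp at hke)
  have hFinj := F.mulVec_injective_of_rank_eq_card (by simpa using hF)
  set g : ℝ → ℝ := fun s => psiPlus F y δ q (s • R + sigeps ^ 2 • 1)
  have hK (s : ℝ) (hs : 0 ≤ s) : (s • R + sigeps ^ 2 • 1).PosDef :=
    PosDef.posSemidef_add (hR.posSemidef.smul hs) (PosDef.one.smul (pow_pos hsig 2))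
  have hg : ContinuousOn g (Ici 0) := fun s hs =>
    ((continuousAt_psiPlus y hFinj hH2 hδ (hK s hs)).comp
      (f := fun s : ℝ => s • R + sigeps ^ 2 • 1) (by fun_prop)).continuousWithinAt
  have hg0 : g 0 ≤ a := by
    have hnoise := psiPlus_noise_le (F := F) y (q := q) hδ hsig
    simp only [standardizedResidual_one] at hnoise
    simpa [g] using hnoise.trans ((div_le_iff₀' (by positivity)).2 hke.le)
  have hev := psiPlus_eventually_eq_one y hn hFinj hH2 hR (sigeps ^ 2) hδq
  have hne := hg.nonempty_Ici_inter_preimage hg0 (hev.mono fun s hs => (ha.2.trans_eq hs.symm).le)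
  have hcpt := hg.isCompact_Ici_inter_preimage (hev.mono fun s hs => (ha.2.trans_eq hs.symm).ne')
  obtain ⟨m, hm, hmin⟩ := hcpt.exists_isLeast hne
  exact ⟨hne, hcpt, m, hm, fun s hs => hmin hs⟩

/-- Lemma 6: the solution set `H = {σ² ∈ [0,∞) : ψ⁺_δ(σ²) = a}` is nonempty
and compact; in particular it contains a minimal element `σ²_opt = min H`. -/
theorem stmt13 (n p : ℕ) (hp : 0 < p) (hpn : p < n)
    (F : Matrix (Fin n) (Fin p) ℝ) (hF : F.rank = p)
    (hH2 : ∀ i : Fin n, Pi.single i (1 : ℝ) ∉ LinearMap.range (Matrix.mulVecLin F))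
    (y : Fin n → ℝ) (R : Matrix (Fin n) (Fin n) ℝ) (hR : R.PosDef)
    (sigeps : ℝ) (hsig : 0 < sigeps)
    (a : ℝ) (ha : a ∈ Set.Ioo (1 / 2 : ℝ) 1)
    (q : ℝ) (hq : 0 < q) (δ : ℝ) (hδ : 0 < δ) (hδq : δ < q)
    (hke : ((Finset.univ.filter fun i : Fin n =>
        (((1 : Matrix (Fin n) (Fin n) ℝ) - F * (Fᵀ * F)⁻¹ * Fᵀ) *ᵥ y) i /
          Real.sqrt (((1 : Matrix (Fin n) (Fin n) ℝ) - F * (Fᵀ * F)⁻¹ * Fᵀ) i i)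
          ≤ sigeps * q).card : ℝ) < n * a) :
    ({s : ℝ | s ∈ Set.Ici (0 : ℝ) ∧
        psiPlus F y δ q (s • R + (sigeps ^ 2) • (1 : Matrix (Fin n) (Fin n) ℝ)) = a}).Nonempty ∧
    IsCompact {s : ℝ | s ∈ Set.Ici (0 : ℝ) ∧
        psiPlus F y δ q (s • R + (sigeps ^ 2) • (1 : Matrix (Fin n) (Fin n) ℝ)) = a} ∧
    ∃ m ∈ {s : ℝ | s ∈ Set.Ici (0 : ℝ) ∧
        psiPlus F y δ q (s • R + (sigeps ^ 2) • (1 : Matrix (Fin n) (Fin n) ℝ)) = a},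
      ∀ s ∈ {s : ℝ | s ∈ Set.Ici (0 : ℝ) ∧
        psiPlus F y δ q (s • R + (sigeps ^ 2) • (1 : Matrix (Fin n) (Fin n) ℝ)) = a},
        m ≤ s :=
  stmt13_general n p F hF hH2 y R hR sigeps hsig a ha q δ hδ hδq hke
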